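/- Let k be an infinite field and R = k[x,y] with homogeneous maximal ideal 𝔪 = (x,y). Let I be a nonzero proper monomial ideal of R that is full. Then there exists an ordering f₁, …, f_s of the minimal monomial generating set G(I) of I such that deg f₁ ≤ deg f₂ ≤ ⋯ ≤ deg f_s and, for every 1 ≤ j ≤ s, the ideal I_j = (f₁, …, f_j) is full. -/

import Mathlib

open MvPolynomial

noncomputable section

variable {k : Type*} [Field k]

/-- An ideal of a polynomial ring is homogeneous if it contains all homogeneous
components of its elements. -/
def IsHomogeneousIdeal {σ : Type*} (I : Ideal (MvPolynomial σ k)) : Prop :=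
  ∀ p ∈ I, ∀ d : ℕ, MvPolynomial.homogeneousComponent d p ∈ I

/-- The homogeneous maximal ideal `(x, y)` of `k[x,y]`. -/
def maxIdeal (k : Type*) [Field k] : Ideal (MvPolynomial (Fin 2) k) :=
  Ideal.span {X 0, X 1}

/-- A homogeneous ideal `I ⊆ k[x,y]` is full if `(I : z) = (I : 𝔪)` for some
linear form `z`. -/
def IsFull (I : Ideal (MvPolynomial (Fin 2) k)) : Prop :=
  ∃ z : MvPolynomial (Fin 2) k, z ≠ 0 ∧ z.IsHomogeneous 1 ∧
    Submodule.colon I (Ideal.span {z}) = Submodule.colon I (maxIdeal k)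

/-- The order `o(I)` of an ideal: the smallest degree of a nonzero homogeneous
element of `I`. -/
def ordDeg (I : Ideal (MvPolynomial (Fin 2) k)) : ℕ :=
  sInf {d : ℕ | ∃ p ∈ I, p ≠ 0 ∧ MvPolynomial.IsHomogeneous p d}

/-- A monomial ideal: an ideal generated by monomials. -/
def IsMonomialIdeal {σ : Type*} (I : Ideal (MvPolynomial σ k)) : Prop :=
  ∃ A : Set (σ →₀ ℕ), I = Ideal.span ((fun a => MvPolynomial.monomial a (1 : k)) '' A)

/-- The minimal monomial generating set `G(I)` of a monomial ideal: the monic monomials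
of `I` whose exponent vectors are minimal with respect to componentwise order
(equivalently, divisibility). -/
def minimalMonomialGens {σ : Type*} (I : Ideal (MvPolynomial σ k)) :
    Set (MvPolynomial σ k) :=
  (fun a => MvPolynomial.monomial a (1 : k)) ''
    {a : σ →₀ ℕ | MvPolynomial.monomial a (1 : k) ∈ I ∧
      ∀ b : σ →₀ ℕ, MvPolynomial.monomial b (1 : k) ∈ I → b ≤ a → b = a}

/-!
For a monomial ideal `I ⊆ k[x,y]`, fullness amounts to gap-freeness: in every degree, the
monomials of `I` ordered by their `x`-exponent form an interval. If `z = αx + βy` and `μ` is a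
monomial with `μ y^g, μ x^g ∈ I`, the telescoping cofactor `q` of `q z = (βy)^g - (-αx)^g` puts
`μ q` into `I : z = I : 𝔪`, and its extreme coefficients `β^(g-1)`, `(-α)^(g-1)` cannot both
vanish, so an inner neighbour of one of the two monomials lies in `I`. Conversely, `z = x + y`
works for a gap-free ideal, because the extreme terms of a form `p` survive in `p (x + y)`.

Along the staircase of minimal generators, listed by increasing `y`-exponent, gap-freeness forces
the degrees to be valley-shaped: first non-increasing, then non-decreasing. Sorting the generators
by degree, breaking ties by distance from the bottom of the valley, adds them at the two ends of a
contiguous block, and a contiguous block of minimal generators of a gap-free ideal generates a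
gap-free, hence full, ideal.
-/

section ValleyEnumeration

variable {α : Type*} {G : Set α}

theorem Set.Finite.exists_fin_enum_strictMono {β : Type*} [LinearOrder β] {key : α → β}
    (hG : G.Finite) (hkey : G.InjOn key) :
    ∃ (s : ℕ) (f : Fin s → α), Function.Injective f ∧ Set.range f = G ∧ StrictMono (key ∘ f) := by
  obtain ⟨s, g, hg⟩ := hG.fin_embedding
  have hgG : ∀ i, g i ∈ G := fun i => hg ▸ Set.mem_range_self i
  refine ⟨s, g ∘ Tuple.sort (key ∘ g), g.injective.comp (Equiv.injective _),
    by rw [(Equiv.surjective _).range_comp, hg],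
    (Tuple.monotone_sort (key ∘ g)).strictMono_of_injective ?_⟩
  exact fun i j h => (Equiv.injective _) (g.injective (hkey (hgG _) (hgG _) h))

/-- Position of `n` in the enumeration `c, c - 1, c + 1, c - 2, c + 2, …` of `ℕ`. -/
def centeredRank (c n : ℕ) : ℕ := if n < c then 2 * (c - n) else 2 * (n - c) + 1

theorem centeredRank_injective (c : ℕ) : Function.Injective (centeredRank c) := by
  intro m n h
  unfold centeredRank at h
  split_ifs at h <;> omega

theorem centeredRank_antitoneOn (c : ℕ) : AntitoneOn (centeredRank c) (Set.Iic c) := by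
  intro m hm n hn h
  simp only [Set.mem_Iic] at hm hn
  unfold centeredRank
  split_ifs <;> omega

theorem centeredRank_monotoneOn (c : ℕ) : MonotoneOn (centeredRank c) (Set.Ici c) := by
  intro m hm n hn h
  simp only [Set.mem_Ici] at hm hn
  unfold centeredRank
  split_ifs <;> omega

variable (deg y : α → ℕ)

theorem exists_center_of_valley (hG : G.Finite)
    (hvalley : ∀ a ∈ G, ∀ b ∈ G, ∀ e ∈ G, y a ≤ y b → y b ≤ y e → deg b ≤ deg a ∨ deg b ≤ deg e) :
    ∃ c, (∀ a ∈ G, ∀ b ∈ G, y a ≤ y b → y b ≤ c → deg b ≤ deg a) ∧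
      ∀ b ∈ G, ∀ e ∈ G, c ≤ y b → y b ≤ y e → deg b ≤ deg e := by
  rcases G.eq_empty_or_nonempty with rfl | hne
  · exact ⟨0, by simp, by simp⟩
  obtain ⟨m, hm, hmin⟩ := Set.exists_min_image G deg hG hne
  exact ⟨y m, fun a ha b hb hab hbm => (hvalley a ha b hb m hm hab hbm).elim id
      fun h => h.trans (hmin a ha),
    fun b hb e he hmb hbe => (hvalley m hm b hb e he hmb hbe).elim
      (fun h => h.trans (hmin e he)) id⟩

theorem exists_fin_enum_of_valley (hG : G.Finite) (hy : G.InjOn y)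
    (hvalley : ∀ a ∈ G, ∀ b ∈ G, ∀ e ∈ G, y a ≤ y b → y b ≤ y e → deg b ≤ deg a ∨ deg b ≤ deg e) :
    ∃ (s : ℕ) (f : Fin s → α), Function.Injective f ∧ Set.range f = G ∧ Monotone (deg ∘ f) ∧
      ∀ j, ∀ a ∈ f '' Set.Iic j, ∀ e ∈ f '' Set.Iic j, ∀ b ∈ G,
        y a ≤ y b → y b ≤ y e → b ∈ f '' Set.Iic j := by
  obtain ⟨c, hleft, hright⟩ := exists_center_of_valley deg y hG hvalley
  set key : α → ℕ ×ₗ ℕ := fun a => toLex (deg a, centeredRank c (y a))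
  have hkey : ∀ a ∈ G, ∀ b ∈ G, ∀ e ∈ G, y a ≤ y b → y b ≤ y e →
      key b ≤ key a ∨ key b ≤ key e := by
    intro a ha b hb e he hab hbe
    rcases le_total (y b) c with hbc | hcb
    · exact Or.inl (Prod.Lex.toLex_mono
        ⟨hleft a ha b hb hab hbc, centeredRank_antitoneOn c (hab.trans hbc) hbc hab⟩)
    · exact Or.inr (Prod.Lex.toLex_mono
        ⟨hright b hb e he hcb hbe, centeredRank_monotoneOn c hcb (hcb.trans hbe) hbe⟩)
  have hkey_inj : G.InjOn key := fun a ha b hb h =>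
    hy ha hb (centeredRank_injective c (Prod.ext_iff.1 (toLex.injective h)).2)
  obtain ⟨s, f, hf_inj, hf_range, hf_mono⟩ := hG.exists_fin_enum_strictMono hkey_inj
  have hfG : ∀ i, f i ∈ G := fun i => hf_range ▸ Set.mem_range_self i
  refine ⟨s, f, hf_inj, hf_range,
    fun i j hij => Prod.Lex.monotone_fst _ _ (hf_mono.monotone hij), ?_⟩
  rintro j _ ⟨i, hi, rfl⟩ _ ⟨i', hi', rfl⟩ b hb h₁ h₂
  obtain ⟨m, rfl⟩ := hf_range.symm ▸ hb
  refine ⟨m, ?_, rfl⟩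
  rcases hkey _ (hfG i) _ (hfG m) _ (hfG i') h₁ h₂ with h | h
  · exact (hf_mono.le_iff_le.1 h).trans hi
  · exact (hf_mono.le_iff_le.1 h).trans hi'

end ValleyEnumeration

section MonomialIdeal

variable {σ : Type*} {I : Ideal (MvPolynomial σ k)}

theorem monomial_mem_of_le {a b : σ →₀ ℕ} (hab : a ≤ b) (ha : monomial a (1 : k) ∈ I) (c : k) :
    monomial b c ∈ I := by
  rw [← add_tsub_cancel_of_le hab, ← one_mul c, ← monomial_mul]
  exact I.mul_mem_right _ ha

theorem mem_of_forall_monomial_mem {p : MvPolynomial σ k}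
    (h : ∀ a ∈ p.support, monomial a (1 : k) ∈ I) : p ∈ I := by
  rw [p.as_sum]
  exact I.sum_mem fun a ha => monomial_mem_of_le le_rfl (h a ha) _

theorem monomial_mem_span_monomial_iff {A : Set (σ →₀ ℕ)} {b : σ →₀ ℕ} :
    monomial b (1 : k) ∈ Ideal.span ((fun a => monomial a (1 : k)) '' A) ↔ ∃ a ∈ A, a ≤ b := by
  classical
  simp [mem_ideal_span_monomial_image, support_monomial]

theorem IsMonomialIdeal.monomial_mem_of_mem_support (hI : IsMonomialIdeal I)
    {p : MvPolynomial σ k} (hp : p ∈ I) {b : σ →₀ ℕ} (hb : b ∈ p.support) :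
    monomial b (1 : k) ∈ I := by
  obtain ⟨A, rfl⟩ := hI
  exact monomial_mem_span_monomial_iff.2 (mem_ideal_span_monomial_image.1 hp b hb)

def minimalExponents (I : Ideal (MvPolynomial σ k)) : Set (σ →₀ ℕ) :=
  {a | Minimal (fun b => monomial b (1 : k) ∈ I) a}

theorem minimalMonomialGens_eq_image :
    minimalMonomialGens I = (fun a => monomial a (1 : k)) '' minimalExponents I := by
  simp only [minimalMonomialGens, minimalExponents, minimal_iff, eq_comm]

theorem finite_minimalExponents [Finite σ] (I : Ideal (MvPolynomial σ k)) :
    (minimalExponents I).Finite :=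
  WellQuasiOrderedLE.finite_of_isAntichain (setOfPred_minimal_antichain _)

theorem exists_mem_minimalExponents_le {a : σ →₀ ℕ} (ha : monomial a (1 : k) ∈ I) :
    ∃ b ∈ minimalExponents I, b ≤ a := by
  obtain ⟨b, hba, hb⟩ := exists_minimal_le_of_wellFoundedLT (fun b => monomial b (1 : k) ∈ I) a ha
  exact ⟨b, hb, hba⟩

end MonomialIdeal

open Finsupp in
theorem C_mul_X_pow_eq_monomial_pow {σ R : Type*} [CommSemiring R] (r : R) (i : σ) (n : ℕ) :
    (C r * X i) ^ n = monomial (single i n) (r ^ n) := by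
  rw [mul_pow, ← C_pow, C_mul_X_pow_eq_monomial]

open Finsupp in
theorem mem_support_mul_X_add_X {σ R : Type*} [CommSemiring R] {p : MvPolynomial σ R}
    {b : σ →₀ ℕ} {i j : σ} (hb : b ∈ p.support)
    (h : ∀ b' ∈ p.support, b' + single j 1 ≠ b + single i 1) :
    b + single i 1 ∈ (p * (X i + X j)).support := by
  have hj : coeff (b + single i 1) (p * X j) = 0 := by
    rw [← MvPolynomial.notMem_support_iff, support_mul_X]
    simpa using h
  rw [MvPolynomial.mem_support_iff, mul_add, coeff_add, coeff_mul_X, hj, add_zero]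
  exact MvPolynomial.mem_support_iff.1 hb

section TwoVariables

open Finsupp

variable {I : Ideal (MvPolynomial (Fin 2) k)}

theorem degree_fin_two (a : Fin 2 →₀ ℕ) : a.degree = a 0 + a 1 := by
  rw [degree_eq_sum, Fin.sum_univ_two]

theorem eq_of_degree_eq_of_apply_zero_eq {a b : Fin 2 →₀ ℕ} (hd : a.degree = b.degree)
    (h0 : a 0 = b 0) : a = b := by
  rw [degree_fin_two, degree_fin_two] at hd
  exact Finsupp.ext (Fin.forall_fin_two.2 ⟨h0, by omega⟩)

theorem mem_colon_maxIdeal {p : MvPolynomial (Fin 2) k} :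
    p ∈ I.colon (maxIdeal k) ↔ p * X 0 ∈ I ∧ p * X 1 ∈ I := by
  simp [maxIdeal, Submodule.mem_colon]

theorem exists_eq_C_mul_X_add_C_mul_X {z : MvPolynomial (Fin 2) k} (hz : z.IsHomogeneous 1) :
    ∃ α β : k, z = C α * X 0 + C β * X 1 := by
  have hz' : z ∈ Submodule.span k (Set.range X) := by
    rw [← homogeneousSubmodule_one_eq_span_X]
    exact hz
  obtain ⟨c, rfl⟩ := (Submodule.mem_span_range_iff_exists_fun k).1 hz'
  exact ⟨c 0, c 1, by simp [Fin.sum_univ_two, smul_eq_C_mul]⟩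

theorem exists_mul_linearForm_eq_sub_monomial (α β : k) {g : ℕ} (hg : 0 < g) :
    ∃ q : MvPolynomial (Fin 2) k,
      q * (C α * X 0 + C β * X 1) =
        monomial (single 1 g) (β ^ g) - monomial (single 0 g) ((-α) ^ g) ∧
      coeff (single 1 (g - 1)) q = β ^ (g - 1) ∧ coeff (single 0 (g - 1)) q = (-α) ^ (g - 1) := by
  obtain ⟨q, hq⟩ : ∃ q : MvPolynomial (Fin 2) k,
      q = ∑ j ∈ Finset.range g, (C (-α) * X 0) ^ j * (C β * X 1) ^ (g - 1 - j) := ⟨_, rfl⟩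
  have hcoeff : ∀ i < g,
      coeff (single 0 i + single 1 (g - 1 - i)) q = (-α) ^ i * β ^ (g - 1 - i) := by
    intro i hi
    simp_rw [hq, C_mul_X_pow_eq_monomial_pow, monomial_mul, coeff_sum, coeff_monomial]
    rw [Finset.sum_eq_single i (fun j _ hji => if_neg fun h => hji (by simpa using congr($h 0)))
      (fun h => absurd (Finset.mem_range.2 hi) h), if_pos rfl]
  refine ⟨q, ?_, by simpa using hcoeff 0 hg, by simpa using hcoeff (g - 1) (by omega)⟩
  have h := geom_sum₂_mul (C (-α) * X 0 : MvPolynomial (Fin 2) k) (C β * X 1) g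
  rw [← hq, map_neg, neg_mul] at h
  rw [← C_mul_X_pow_eq_monomial_pow, ← C_mul_X_pow_eq_monomial_pow, map_neg, neg_mul]
  linear_combination -h

def IsGapFree (I : Ideal (MvPolynomial (Fin 2) k)) : Prop :=
  ∀ ⦃a b c : Fin 2 →₀ ℕ⦄, a.degree = b.degree → c.degree = b.degree → a 0 ≤ b 0 → b 0 ≤ c 0 →
    monomial a (1 : k) ∈ I → monomial c (1 : k) ∈ I → monomial b (1 : k) ∈ I

theorem IsFull.inner_neighbor_mem (hI : IsMonomialIdeal I) (hfull : IsFull I)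
    (m : Fin 2 →₀ ℕ) {g : ℕ} (hg : 0 < g)
    (hy : monomial (m + single 1 g) (1 : k) ∈ I) (hx : monomial (m + single 0 g) (1 : k) ∈ I) :
    monomial (m + single 1 (g - 1) + single 0 1) (1 : k) ∈ I ∨
      monomial (m + single 0 (g - 1) + single 1 1) (1 : k) ∈ I := by
  obtain ⟨z, hz0, hz1, hcolon⟩ := hfull
  obtain ⟨α, β, rfl⟩ := exists_eq_C_mul_X_add_C_mul_X hz1
  obtain ⟨q, hqz, hqy, hqx⟩ := exists_mul_linearForm_eq_sub_monomial α β hg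
  have hpz : monomial m 1 * q * (C α * X 0 + C β * X 1) ∈ I := by
    rw [mul_assoc, hqz, mul_sub, monomial_mul, monomial_mul]
    exact sub_mem (monomial_mem_of_le le_rfl hy _) (monomial_mem_of_le le_rfl hx _)
  have hp := mem_colon_maxIdeal.1 (hcolon ▸ Ideal.mem_colon_span_singleton.2 hpz)
  by_cases hβ : β = 0
  · have hα : α ≠ 0 := by rintro rfl; simp [hβ] at hz0
    refine Or.inr (hI.monomial_mem_of_mem_support hp.2 (MvPolynomial.mem_support_iff.2 ?_))
    rw [coeff_mul_X, coeff_monomial_mul, hqx]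
    simp [hα]
  · refine Or.inl (hI.monomial_mem_of_mem_support hp.1 (MvPolynomial.mem_support_iff.2 ?_))
    rw [coeff_mul_X, coeff_monomial_mul, hqy]
    simp [hβ]

theorem IsFull.isGapFree (hI : IsMonomialIdeal I) (hfull : IsFull I) : IsGapFree I := by
  intro a b c hab hcb hab0 hbc0 ha hc
  induction hn : c 0 - a 0 generalizing a c with
  | zero => exact eq_of_degree_eq_of_apply_zero_eq hab (by omega) ▸ ha
  | succ n ih =>
    rcases hab0.eq_or_lt with heq | hab_lt
    · exact eq_of_degree_eq_of_apply_zero_eq hab heq ▸ ha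
    rcases hbc0.eq_or_lt with heq | hbc_lt
    · exact eq_of_degree_eq_of_apply_zero_eq hcb heq.symm ▸ hc
    have hac := hab.trans hcb.symm
    rw [degree_fin_two, degree_fin_two] at hac
    set m := a ⊓ c
    have ham : m + single 1 (n + 1) = a := by ext i; fin_cases i <;> simp [m] <;> omega
    have hcm : m + single 0 (n + 1) = c := by ext i; fin_cases i <;> simp [m] <;> omega
    rcases hfull.inner_neighbor_mem hI m n.succ_pos (ham ▸ ha) (hcm ▸ hc) with ha' | hc'
    · refine ih ?_ hcb ?_ hbc0 ha' hc ?_ <;> simp [m, ← hab, degree_fin_two] <;> omega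
    · refine ih hab ?_ hab0 ?_ ha hc' ?_ <;> simp [m, ← hcb, degree_fin_two] <;> omega

theorem IsGapFree.monomial_mem_of_mul_X_add_X_mem (hI : IsMonomialIdeal I) (hgap : IsGapFree I)
    {p : MvPolynomial (Fin 2) k} (hp : p * (X 0 + X 1) ∈ I) {a : Fin 2 →₀ ℕ}
    (ha : a ∈ p.support) :
    monomial (a + single 0 1) (1 : k) ∈ I ∧ monomial (a + single 1 1) (1 : k) ∈ I := by
  set D := p.support.filter (fun b => b.degree = a.degree)
  have haD : a ∈ D := Finset.mem_filter.2 ⟨ha, rfl⟩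
  obtain ⟨l, hlD, hl⟩ := D.exists_min_image (· 0) ⟨a, haD⟩
  obtain ⟨r, hrD, hr⟩ := D.exists_max_image (· 0) ⟨a, haD⟩
  obtain ⟨hlp, hld⟩ := Finset.mem_filter.1 hlD
  obtain ⟨hrp, hrd⟩ := Finset.mem_filter.1 hrD
  have hl' : monomial (l + single 1 1) (1 : k) ∈ I := by
    refine hI.monomial_mem_of_mem_support (add_comm (X 0 : MvPolynomial (Fin 2) k) (X 1) ▸ hp)
      (mem_support_mul_X_add_X hlp fun b hb h => ?_)
    have h0 : b 0 + 1 = l 0 := by simpa using congr($h 0)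
    have hbd : b.degree = l.degree := by simpa using congr(degree $h)
    have := hl b (Finset.mem_filter.2 ⟨hb, hbd.trans hld⟩)
    omega
  have hr' : monomial (r + single 0 1) (1 : k) ∈ I := by
    refine hI.monomial_mem_of_mem_support hp (mem_support_mul_X_add_X hrp fun b hb h => ?_)
    have h0 : b 0 = r 0 + 1 := by simpa using congr($h 0)
    have hbd : b.degree = r.degree := by simpa using congr(degree $h)
    have := hr b (Finset.mem_filter.2 ⟨hb, hbd.trans hrd⟩)
    omega
  have hla := hl a haD
  have hra := hr a haD
  constructor <;> refine hgap ?_ ?_ ?_ ?_ hl' hr' <;> simp [hld, hrd] <;> omega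

theorem IsGapFree.isFull (hI : IsMonomialIdeal I) (hgap : IsGapFree I) : IsFull I := by
  refine ⟨X 0 + X 1, fun h => by simpa using congr(coeff (single 0 1) $h),
    (isHomogeneous_X _ _).add (isHomogeneous_X _ _), le_antisymm (fun p hp => ?_) (fun p hp => ?_)⟩
  · have hmem := fun a (ha : a ∈ p.support) =>
      hgap.monomial_mem_of_mul_X_add_X_mem hI (Ideal.mem_colon_span_singleton.1 hp) ha
    refine mem_colon_maxIdeal.2 ⟨mem_of_forall_monomial_mem ?_, mem_of_forall_monomial_mem ?_⟩ <;>
      simp only [support_mul_X, Finset.mem_map, addRightEmbedding_apply] <;>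
      rintro _ ⟨a, ha, rfl⟩
    exacts [(hmem a ha).1, (hmem a ha).2]
  · rw [Ideal.mem_colon_span_singleton, mul_add]
    exact add_mem (mem_colon_maxIdeal.1 hp).1 (mem_colon_maxIdeal.1 hp).2

theorem eq_of_mem_minimalExponents {t t' : Fin 2 →₀ ℕ} (ht : t ∈ minimalExponents I)
    (ht' : t' ∈ minimalExponents I) (h0 : t 0 ≤ t' 0) (h1 : t 1 ≤ t' 1) : t = t' := by
  have hle : t ≤ t' := le_def.2 (Fin.forall_fin_two.2 ⟨h0, h1⟩)
  exact le_antisymm hle (ht'.2 ht.1 hle)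

theorem injOn_apply_one_minimalExponents :
    Set.InjOn (fun a : Fin 2 →₀ ℕ => a 1) (minimalExponents I) := fun t ht t' ht' h =>
  (le_total (t 0) (t' 0)).elim (fun h0 => eq_of_mem_minimalExponents ht ht' h0 h.le)
    (fun h0 => (eq_of_mem_minimalExponents ht' ht h0 h.ge).symm)

theorem IsGapFree.degree_le_or_degree_le (hgap : IsGapFree I) {a b e : Fin 2 →₀ ℕ}
    (hb : b ∈ minimalExponents I) (ha : monomial a (1 : k) ∈ I) (he : monomial e (1 : k) ∈ I)
    (hab : a 1 ≤ b 1) (hbe : b 1 ≤ e 1) : b.degree ≤ a.degree ∨ b.degree ≤ e.degree := by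
  by_contra! h
  -- then `x^(b 0 - 1) y^(b 1)` lies between two monomials of `I` of degree `b.degree - 1`
  rw [degree_fin_two, degree_fin_two, degree_fin_two] at h
  have hmid := hgap (a := e + single 1 (b.degree - 1 - e.degree)) (b := b - single 0 1)
    (c := a + single 0 (b.degree - 1 - a.degree))
    (by simp [degree_fin_two]; omega) (by simp [degree_fin_two]; omega)
    (by simp [degree_fin_two]; omega) (by simp [degree_fin_two]; omega)
    (monomial_mem_of_le le_self_add he 1) (monomial_mem_of_le le_self_add ha 1)
  have := congr($(le_antisymm tsub_le_self (hb.2 hmid tsub_le_self)) 0)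
  simp only [coe_tsub, Pi.sub_apply, single_eq_same] at this
  omega

theorem IsGapFree.span_monomial_of_convex (hgap : IsGapFree I) {T : Set (Fin 2 →₀ ℕ)}
    (hT : T ⊆ minimalExponents I)
    (hconv : ∀ a ∈ T, ∀ c ∈ T, ∀ b ∈ minimalExponents I, a 1 ≤ b 1 → b 1 ≤ c 1 → b ∈ T) :
    IsGapFree (Ideal.span ((fun a => monomial a (1 : k)) '' T)) := by
  intro a b c hab hcb hab0 hbc0 ha hc
  obtain ⟨t₁, ht₁, ht₁a⟩ := monomial_mem_span_monomial_iff.1 ha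
  obtain ⟨t₂, ht₂, ht₂c⟩ := monomial_mem_span_monomial_iff.1 hc
  obtain ⟨t₀, ht₀, ht₀b⟩ := exists_mem_minimalExponents_le <| hgap hab hcb hab0 hbc0
    (monomial_mem_of_le ht₁a (hT ht₁).1 1) (monomial_mem_of_le ht₂c (hT ht₂).1 1)
  refine monomial_mem_span_monomial_iff.2 ?_
  rw [degree_fin_two, degree_fin_two] at hab hcb
  simp only [le_def, Fin.forall_fin_two] at ht₁a ht₂c ht₀b ⊢
  rcases lt_or_ge (t₀ 1) (t₂ 1) with h₂ | h₂
  · have : t₂ 0 < t₀ 0 := by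
      by_contra! h
      have := eq_of_mem_minimalExponents ht₀ (hT ht₂) h h₂.le
      subst this
      omega
    exact ⟨t₂, ht₂, by omega, by omega⟩
  rcases lt_or_ge (t₁ 1) (t₀ 1) with h₁ | h₁
  · exact ⟨t₁, ht₁, by omega, by omega⟩
  · exact ⟨t₀, hconv t₂ ht₂ t₁ ht₁ t₀ ht₀ h₂ h₁, ht₀b⟩

end TwoVariables

theorem full_initial_segments_order_general {k : Type*} [Field k]
    (I : Ideal (MvPolynomial (Fin 2) k))
    (hmon : IsMonomialIdeal I) (hfull : IsFull I) :
    ∃ (s : ℕ) (f : Fin s → MvPolynomial (Fin 2) k),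
      Function.Injective f ∧
      Set.range f = minimalMonomialGens I ∧
      (∀ i j : Fin s, i ≤ j → (f i).totalDegree ≤ (f j).totalDegree) ∧
      ∀ j : Fin s, IsFull (Ideal.span (f '' {l : Fin s | l ≤ j})) := by
  have hgap := hfull.isGapFree hmon
  obtain ⟨s, e, he_inj, he_range, he_deg, he_conv⟩ :=
    exists_fin_enum_of_valley Finsupp.degree (fun a : Fin 2 →₀ ℕ => a 1)
      (finite_minimalExponents I) injOn_apply_one_minimalExponents
      fun a ha b hb c hc hab hbc => hgap.degree_le_or_degree_le hb ha.1 hc.1 hab hbc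
  refine ⟨s, fun j => monomial (e j) 1, (monomial_left_injective one_ne_zero).comp he_inj, ?_,
    fun i j hij => ?_, fun j => ?_⟩
  · rw [minimalMonomialGens_eq_image, ← he_range, ← Set.range_comp]
    rfl
  · rw [totalDegree_monomial _ one_ne_zero, totalDegree_monomial _ one_ne_zero]
    exact he_deg hij
  · have hT : e '' Set.Iic j ⊆ minimalExponents I := he_range ▸ Set.image_subset_range _ _
    have := (hgap.span_monomial_of_convex hT (he_conv j)).isFull ⟨_, rfl⟩
    rwa [Set.image_image] at this

theorem full_initial_segments_order {k : Type*} [Field k] [Infinite k]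
    (I : Ideal (MvPolynomial (Fin 2) k))
    (hI0 : I ≠ ⊥) (hItop : I ≠ ⊤)
    (hmon : IsMonomialIdeal I) (hfull : IsFull I) :
    ∃ (s : ℕ) (f : Fin s → MvPolynomial (Fin 2) k),
      Function.Injective f ∧
      Set.range f = minimalMonomialGens I ∧
      (∀ i j : Fin s, i ≤ j → (f i).totalDegree ≤ (f j).totalDegree) ∧
      ∀ j : Fin s, IsFull (Ideal.span (f '' {l : Fin s | l ≤ j})) :=
  full_initial_segments_order_general I hmon hfull
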